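/- Let α ∉ ℤ and F ∈ ℂ, F ≠ 0, and set F_{j,n} = (α+n)/(α+n+j)·F for all j, n ∈ ℤ. Define w_{α+n} = v_{α+n}/(α+n) on the space with basis {v_{α+n}}. If x_i v_{α+n} = (α+n)v_{α+n+i} and I(i)v_{α+n} = F_{i,n}v_{α+n+i}, then in the new basis x_i w_{α+n} = (α+n+i)w_{α+n+i} and I(i)w_{α+n} = F·w_{α+n+i}; i.e., the module is isomorphic to V(α,1;F). -/

import Mathlib

/-- The action of `x i` in Case 2.2.1 of Lemma 3.1: `x i · v_{α+n} = (α+n) v_{α+n+i}`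
(the basis vector `Finsupp.single n 1` plays the role of `v_{α+n}`). -/
noncomputable def C221x (α : ℂ) (i : ℤ) : (ℤ →₀ ℂ) →ₗ[ℂ] (ℤ →₀ ℂ) :=
  Finsupp.lsum ℂ fun n : ℤ => (α + n) • Finsupp.lsingle (n + i)

/-- The action of `I i` in Case 2.2.1 of Lemma 3.1:
`I i · v_{α+n} = (α+n)/(α+n+i) · F · v_{α+n+i}`. -/
noncomputable def C221I (α F : ℂ) (i : ℤ) : (ℤ →₀ ℂ) →ₗ[ℂ] (ℤ →₀ ℂ) :=
  Finsupp.lsum ℂ fun n : ℤ => ((α + n) / (α + n + i) * F) • Finsupp.lsingle (n + i)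

/-- The rescaled basis vector `w_{α+n} = v_{α+n}/(α+n)`. -/
noncomputable def C221w (α : ℂ) (n : ℤ) : ℤ →₀ ℂ :=
  (α + n)⁻¹ • Finsupp.single n 1

/-! The rescaling `w_{α+n} = v_{α+n}/(α+n)` is legitimate because `α ∉ ℤ` makes every `α + n`
invertible; after it, the factor `α + n` of `x i` and the factor `(α+n)/(α+n+i)` of `I i` are
absorbed into the ratio of the two scalings `(α+n)⁻¹` and `(α+n+i)⁻¹`. -/

lemma add_intCast_ne_zero {α : ℂ} (hα : ∀ m : ℤ, α ≠ (m : ℂ)) (n : ℤ) : α + n ≠ 0 := fun h =>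
  hα (-n) (by push_cast; linear_combination h)

lemma C221x_single (α : ℂ) (i n : ℤ) :
    C221x α i (Finsupp.single n 1) = (α + n) • Finsupp.single (n + i) 1 := by
  simp [C221x]

lemma C221I_single (α F : ℂ) (i n : ℤ) :
    C221I α F i (Finsupp.single n 1) =
      ((α + n) / (α + n + i) * F) • Finsupp.single (n + i) 1 := by
  simp [C221I]

theorem case_2_2_1_general (α F : ℂ) (hα : ∀ m : ℤ, α ≠ (m : ℂ)) :
    ∀ i n : ℤ,
      C221x α i (C221w α n) = (α + n + i) • C221w α (n + i) ∧
      C221I α F i (C221w α n) = F • C221w α (n + i) := by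
  intro i n
  have hn := add_intCast_ne_zero hα n
  have hni : α + n + i ≠ 0 := by simpa [add_assoc] using add_intCast_ne_zero hα (n + i)
  simp only [C221w, map_smul, C221x_single, C221I_single, smul_smul, Int.cast_add, ← add_assoc]
  constructor
  · rw [inv_mul_cancel₀ hn, mul_inv_cancel₀ hni]
  · congr 1
    field_simp

/-- Case 2.2.1 of Lemma 3.1: if `α ∉ ℤ`, `F ≠ 0`, `x i v_{α+n} = (α+n)v_{α+n+i}` and
`I i v_{α+n} = (α+n)/(α+n+i)·F·v_{α+n+i}`, then in the rescaled basis
`w_{α+n} = v_{α+n}/(α+n)` one has `x i w_{α+n} = (α+n+i)w_{α+n+i}` and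
`I i w_{α+n} = F·w_{α+n+i}`; i.e. the module is isomorphic to `V(α,1;F)`. -/
theorem case_2_2_1 (α F : ℂ) (hα : ∀ m : ℤ, α ≠ (m : ℂ)) (hF : F ≠ 0) :
    ∀ i n : ℤ,
      C221x α i (C221w α n) = (α + n + i) • C221w α (n + i) ∧
      C221I α F i (C221w α n) = F • C221w α (n + i) :=
  case_2_2_1_general α F hα
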